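/- arXiv:2102.07342 — 4 statements merged into one kernel-verified Lean document; each statement's English description precedes it below -/
import Mathlib

section
/- Let m = m(n) and p = p(n) satisfy p(n)·n → ∞ and p(n)·m(n) → ∞ as n → ∞, and suppose p is bounded away from 1 (i.e. there is a constant c < 1 with p(n) ≤ c for all n) and m = O(n) (i.e. there is a constant C with m(n) ≤ C·n for all n). Then there exists a constant κ > 0 such that, for H drawn from the edge-independent model H(n, m(n), p(n)), the probability that disc(H) ≥ κ · max{ 2^(−n/m(n)) · √(p(n)·n), 1 } tends to 1 as n → ∞. -/
open MeasureTheory ProbabilityTheory Filter Real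
open scoped ENNReal NNReal

/-- The Bernoulli measure on `Bool` with parameter `p`. -/
noncomputable def bernoulliMeasure (p : ℝ) : Measure Bool :=
  ENNReal.ofReal p • Measure.dirac true + ENNReal.ofReal (1 - p) • Measure.dirac false

/-- The edge-independent model `H(n,m,p)`: a random `m × n` `{0,1}`-matrix
(rows = edges, columns = vertices) with i.i.d. Bernoulli(p) entries. -/
noncomputable def edgeIndepModel (n m : ℕ) (p : ℝ) :
    Measure (Fin m → Fin n → Bool) :=
  Measure.pi fun _ : Fin m => Measure.pi fun _ : Fin n => bernoulliMeasure p

/-- Uniform measure on `{0,1}`-vectors of length `m` with exactly `d` ones. -/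
noncomputable def uniformColumn (m d : ℕ) : Measure (Fin m → Bool) :=
  (((Finset.univ.filter fun v : Fin m → Bool =>
      (Finset.univ.filter fun j => v j = true).card = d).card : ℝ≥0∞))⁻¹ •
    ∑ v ∈ Finset.univ.filter (fun v : Fin m → Bool =>
      (Finset.univ.filter fun j => v j = true).card = d), Measure.dirac v

/-- The edge-dependent model `H(n,m,d)`: the columns of the `m × n` incidence matrix
are independent, each uniform over the `{0,1}`-vectors with exactly `d` ones. -/
noncomputable def edgeDepModel (n m d : ℕ) : Measure (Fin m → Fin n → Bool) :=
  (Measure.pi fun _ : Fin n => uniformColumn m d).map fun B => fun i k => B k i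

/-- The discrepancy of an `m × n` `{0,1}`-incidence matrix: the minimum over
`±1`-colourings of the columns (vertices) of the maximum absolute signed row sum. -/
noncomputable def disc {m n : ℕ} (A : Fin m → Fin n → Bool) : ℕ :=
  ⨅ ψ : Fin n → Bool,
    Finset.univ.sup fun i : Fin m =>
      (∑ k : Fin n, if A i k then (if ψ k then (1 : ℤ) else -1) else 0).natAbs

/-!
If the target `κ · max (2^(-n/m) √(pn)) 1` is at most `1`, discrepancy below it means
discrepancy `0`, which forces every edge to have even size; a single edge is even with
probability `(1 + (1 - 2p)^n) / 2 ≤ 3/4`. Otherwise we take a union bound over the `2^n`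
colourings. For a fixed colouring, condition on the entries outside its larger colour class: the
signed sum of an edge becomes a shifted, possibly negated, binomial variable on at least `n/2`
trials, and by Stirling's formula at the mode it takes each value with probability at most
`√2 / √(np(1-p))`. So an edge has signed sum of absolute value below `t` with probability at
most `3t√2 / √(np(1-p))`, which the choice `κ = √(1 - c) / 9` makes at most `2^(-n/m) / 2`;
and `2^n (2^(-n/m) / 2)^m = 2^(-m)`.
-/

open Finset
open scoped Nat

namespace DiscLowerBound

section Binomial

theorem factorial_le_exp_one_mul_sqrt_mul_pow {n : ℕ} (hn : n ≠ 0) :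
    (n ! : ℝ) ≤ exp 1 * √n * (n / exp 1) ^ n := by
  obtain ⟨k, rfl⟩ := Nat.exists_eq_succ_of_ne_zero hn
  have h : Stirling.stirlingSeq (k + 1) ≤ exp 1 / √2 := by
    simpa [Stirling.stirlingSeq_one] using Stirling.stirlingSeq'_antitone (Nat.zero_le k)
  rw [Stirling.stirlingSeq, div_le_iff₀ (by positivity)] at h
  calc ((k + 1) ! : ℝ) ≤ exp 1 / √2 * (√(2 * (k + 1 : ℕ)) * ((k + 1 : ℕ) / exp 1) ^ (k + 1)) := by
        exact_mod_cast h
    _ = _ := by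
        rw [Real.sqrt_mul zero_le_two]
        field_simp

theorem pow_le_exp_mul_sub_one {x : ℝ} (hx : 0 ≤ x) (k : ℕ) : x ^ k ≤ exp (k * (x - 1)) := by
  rw [Real.exp_nat_mul]
  exact pow_le_pow_left₀ hx (by linarith [Real.add_one_le_exp (x - 1)]) k

theorem pow_mul_pow_mul_pow_le {N j : ℕ} {p : ℝ} (hp0 : 0 ≤ p) (hp1 : p ≤ 1) (hj : j ≠ 0)
    (hjN : j < N) :
    (N : ℝ) ^ N * p ^ j * (1 - p) ^ (N - j) ≤ (j : ℝ) ^ j * ((N - j : ℕ) : ℝ) ^ (N - j) := by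
  have hj0 : (j : ℝ) ≠ 0 := by exact_mod_cast hj
  have hNj0 : ((N - j : ℕ) : ℝ) ≠ 0 := by exact_mod_cast Nat.sub_ne_zero_of_lt hjN
  have hq : 0 ≤ 1 - p := by linarith
  have hgibbs : (N * p / j : ℝ) ^ j * (N * (1 - p) / (N - j : ℕ)) ^ (N - j) ≤ 1 := by
    calc (N * p / j : ℝ) ^ j * (N * (1 - p) / (N - j : ℕ)) ^ (N - j)
        ≤ exp (j * (N * p / j - 1)) * exp ((N - j : ℕ) * (N * (1 - p) / (N - j : ℕ) - 1)) :=
          mul_le_mul (pow_le_exp_mul_sub_one (by positivity) _)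
            (pow_le_exp_mul_sub_one (by positivity) _) (by positivity) (by positivity)
      _ = 1 := by
          rw [← Real.exp_add, Real.exp_eq_one_iff]
          field_simp
          rw [Nat.cast_sub hjN.le]
          ring
  calc (N : ℝ) ^ N * p ^ j * (1 - p) ^ (N - j)
      = (j : ℝ) ^ j * ((N - j : ℕ) : ℝ) ^ (N - j)
          * ((N * p / j : ℝ) ^ j * (N * (1 - p) / (N - j : ℕ)) ^ (N - j)) := by
        rw [mul_mul_mul_comm, ← mul_pow, ← mul_pow, mul_div_cancel₀ _ hj0, mul_div_cancel₀ _ hNj0,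
          mul_pow, mul_pow, ← Nat.add_sub_cancel' hjN.le, pow_add, Nat.add_sub_cancel_left]
        ring
    _ ≤ (j : ℝ) ^ j * ((N - j : ℕ) : ℝ) ^ (N - j) := mul_le_of_le_one_right (by positivity) hgibbs

noncomputable def binomialTerm (N : ℕ) (p : ℝ) (j : ℕ) : ℝ :=
  N.choose j * p ^ j * (1 - p) ^ (N - j)

variable {N j : ℕ} {p : ℝ}

theorem binomialTerm_nonneg (hp0 : 0 ≤ p) (hp1 : p ≤ 1) : 0 ≤ binomialTerm N p j := by
  have : 0 ≤ 1 - p := by linarith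
  unfold binomialTerm; positivity

theorem binomialTerm_mul_factorial_mul_factorial (hj : j ≤ N) :
    binomialTerm N p j * (j ! * (N - j)! : ℝ) = N ! * p ^ j * (1 - p) ^ (N - j) := by
  rw [← Nat.choose_mul_factorial_mul_factorial hj, binomialTerm]
  push_cast
  ring

theorem binomialTerm_mul_le (hp0 : 0 < p) (hp1 : p < 1) (hj : j ≠ 0) (hjN : j < N) :
    binomialTerm N p j * (2 * π * (√j * √(N - j : ℕ))) ≤ exp 1 * √N := by
  have hNj : N - j ≠ 0 := by omega
  set E : ℝ := (j / exp 1) ^ j * ((N - j : ℕ) / exp 1) ^ (N - j)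
  have hE : 0 < E := by positivity
  have hlower : 2 * π * (√j * √(N - j : ℕ)) * E ≤ (j ! * (N - j)! : ℝ) := by
    have hsqrt : 2 * π * (√j * √(N - j : ℕ)) = √(2 * π * j) * √(2 * π * (N - j : ℕ)) := by
      have h2π : √(2 * π) * √(2 * π) = 2 * π := Real.mul_self_sqrt (by positivity)
      rw [Real.sqrt_mul (by positivity) (j : ℝ), Real.sqrt_mul (by positivity) ((N - j : ℕ) : ℝ)]
      linear_combination (-(√j * √(N - j : ℕ))) * h2π
    rw [hsqrt, mul_mul_mul_comm]
    exact mul_le_mul (Stirling.le_factorial_stirling j) (Stirling.le_factorial_stirling (N - j))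
      (by positivity) (by positivity)
  have hupper : (N ! : ℝ) * p ^ j * (1 - p) ^ (N - j) ≤ exp 1 * √N * E := by
    have hq : 0 ≤ 1 - p := by linarith
    have hentropy : (N / exp 1 : ℝ) ^ N * p ^ j * (1 - p) ^ (N - j) ≤ E := by
      have hexp : exp 1 ^ N = exp 1 ^ j * exp 1 ^ (N - j) := by
        rw [← pow_add, Nat.add_sub_cancel' hjN.le]
      simp only [E, div_pow, hexp]
      rw [div_mul_div_comm, div_mul_eq_mul_div, div_mul_eq_mul_div,
        div_le_div_iff_of_pos_right (by positivity)]
      exact pow_mul_pow_mul_pow_le hp0.le hp1.le hj hjN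
    calc (N ! : ℝ) * p ^ j * (1 - p) ^ (N - j)
        ≤ exp 1 * √N * ((N / exp 1 : ℝ) ^ N * p ^ j * (1 - p) ^ (N - j)) := by
          rw [← mul_assoc, ← mul_assoc]
          gcongr
          exact factorial_le_exp_one_mul_sqrt_mul_pow (by omega)
      _ ≤ exp 1 * √N * E := by gcongr
  refine le_of_mul_le_mul_right ?_ hE
  calc binomialTerm N p j * (2 * π * (√j * √(N - j : ℕ))) * E
      ≤ binomialTerm N p j * (j ! * (N - j)! : ℝ) := by
        rw [mul_assoc]
        exact mul_le_mul_of_nonneg_left hlower (binomialTerm_nonneg hp0.le hp1.le)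
    _ ≤ exp 1 * √N * E := by
        rw [binomialTerm_mul_factorial_mul_factorial hjN.le]
        exact hupper

theorem binomialTerm_succ_mul (hj : j < N) :
    binomialTerm N p (j + 1) * ((j + 1) * (1 - p)) = binomialTerm N p j * ((N - j) * p) := by
  have hchoose : (N.choose (j + 1) : ℝ) * (j + 1) = N.choose j * (N - j) := by
    have := congrArg (Nat.cast (R := ℝ)) (Nat.choose_succ_right_eq N j)
    push_cast [Nat.cast_sub hj.le] at this
    exact this
  obtain ⟨k, hk⟩ : ∃ k, N - j = k + 1 := ⟨N - (j + 1), by omega⟩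
  rw [binomialTerm, binomialTerm, hk, show N - (j + 1) = k by omega]
  linear_combination p ^ (j + 1) * (1 - p) ^ (k + 1) * hchoose

theorem binomialTerm_le_succ (hp0 : 0 < p) (hp1 : p < 1) (h : j + 1 ≤ (N + 1) * p) :
    binomialTerm N p j ≤ binomialTerm N p (j + 1) := by
  have hjN : j < N := by
    have : (j : ℝ) < N := by nlinarith
    exact_mod_cast this
  have hpos : (0 : ℝ) < (j + 1) * (1 - p) := by nlinarith
  refine le_of_mul_le_mul_right ?_ hpos
  rw [binomialTerm_succ_mul hjN]
  exact mul_le_mul_of_nonneg_left (by nlinarith) (binomialTerm_nonneg hp0.le hp1.le)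

theorem binomialTerm_succ_le (hp0 : 0 < p) (hp1 : p < 1) (h : (N + 1) * p ≤ j + 1) :
    binomialTerm N p (j + 1) ≤ binomialTerm N p j := by
  rcases lt_or_ge j N with hjN | hjN
  · have hpos : (0 : ℝ) < (j + 1) * (1 - p) := by nlinarith
    refine le_of_mul_le_mul_right ?_ hpos
    rw [binomialTerm_succ_mul hjN]
    have hjN' : (j : ℝ) < N := by exact_mod_cast hjN
    exact mul_le_mul_of_nonneg_left (by nlinarith) (binomialTerm_nonneg hp0.le hp1.le)
  · have h0 : binomialTerm N p (j + 1) = 0 := by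
      simp [binomialTerm, Nat.choose_eq_zero_of_lt (Nat.lt_succ_of_le hjN)]
    exact h0 ▸ binomialTerm_nonneg hp0.le hp1.le

theorem binomialTerm_le_of_le {i k : ℕ} (hp0 : 0 < p) (hp1 : p < 1) (hik : i ≤ k)
    (hk : k ≤ (N + 1) * p) : binomialTerm N p i ≤ binomialTerm N p k := by
  induction k, hik using Nat.le_induction with
  | base => exact le_rfl
  | succ k _ ih =>
    push_cast at hk
    exact (ih (by linarith)).trans (binomialTerm_le_succ hp0 hp1 hk)

theorem binomialTerm_le_of_ge {i k : ℕ} (hp0 : 0 < p) (hp1 : p < 1) (hki : k ≤ i)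
    (hk : (N + 1) * p < k + 1) : binomialTerm N p i ≤ binomialTerm N p k := by
  induction i, hki using Nat.le_induction with
  | base => exact le_rfl
  | succ i hki ih =>
    have : (k : ℝ) ≤ i := by exact_mod_cast hki
    exact (binomialTerm_succ_le hp0 hp1 (by linarith)).trans ih

theorem binomialTerm_le_mode (hp0 : 0 < p) (hp1 : p < 1) (j : ℕ) :
    binomialTerm N p j ≤ binomialTerm N p ⌊(N + 1) * p⌋₊ := by
  rcases le_total j ⌊(N + 1) * p⌋₊ with hj | hj
  · exact binomialTerm_le_of_le hp0 hp1 hj (Nat.floor_le (by positivity))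
  · exact binomialTerm_le_of_ge hp0 hp1 hj (Nat.lt_floor_add_one _)

theorem binomialTerm_le_inv_sqrt (hp0 : 0 < p) (hp1 : p < 1) (hNp : 2 ≤ N * p)
    (hNq : 2 ≤ N * (1 - p)) (j : ℕ) :
    binomialTerm N p j ≤ 1 / √(N * p * (1 - p)) := by
  refine (binomialTerm_le_mode hp0 hp1 j).trans ?_
  set k := ⌊(N + 1) * p⌋₊
  have hk : (k : ℝ) ≤ (N + 1) * p := Nat.floor_le (by positivity)
  have hk' : (N + 1) * p < k + 1 := Nat.lt_floor_add_one _
  have hkN : k < N := by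
    have : (k : ℝ) < N := by nlinarith
    exact_mod_cast this
  have hk0 : k ≠ 0 := by
    rintro h
    rw [h, Nat.cast_zero] at hk'
    nlinarith
  have hNk : ((N - k : ℕ) : ℝ) = N - k := Nat.cast_sub hkN.le
  -- At the mode, `k ≥ Np - 1 ≥ Np / 2` and `N - k ≥ N(1 - p) - 1 ≥ N(1 - p) / 2`.
  have hprod : N * (N * p * (1 - p)) ≤ 4 * (k * (N - k : ℕ)) := by
    rw [hNk]
    nlinarith
  have hsqrt : √N * √(N * p * (1 - p)) ≤ 2 * (√k * √(N - k : ℕ)) := by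
    rw [← Real.sqrt_mul (by positivity), ← Real.sqrt_mul (by positivity),
      show (2 : ℝ) = √4 by rw [show (4 : ℝ) = 2 ^ 2 by norm_num, Real.sqrt_sq zero_le_two],
      ← Real.sqrt_mul (by positivity)]
    exact Real.sqrt_le_sqrt hprod
  have he : exp 1 ≤ π := by linarith [Real.exp_one_lt_d9, Real.pi_gt_three]
  have hD : 0 < 2 * π * (√k * √(N - k : ℕ)) := by
    have hk0' : (0 : ℝ) < k := by exact_mod_cast Nat.pos_of_ne_zero hk0
    have hNk0 : (0 : ℝ) < (N - k : ℕ) := by exact_mod_cast Nat.sub_pos_of_lt hkN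
    exact mul_pos (by positivity) (mul_pos (Real.sqrt_pos.2 hk0') (Real.sqrt_pos.2 hNk0))
  calc binomialTerm N p k ≤ exp 1 * √N / (2 * π * (√k * √(N - k : ℕ))) :=
        (le_div_iff₀ hD).2 (binomialTerm_mul_le hp0 hp1 hk0 hkN)
    _ ≤ 1 / √(N * p * (1 - p)) := by
        rw [div_le_div_iff₀ hD (Real.sqrt_pos.2 (by nlinarith)), one_mul, mul_assoc]
        calc exp 1 * (√N * √(N * p * (1 - p))) ≤ π * (2 * (√k * √(N - k : ℕ))) :=
              mul_le_mul he hsqrt (by positivity) Real.pi_pos.le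
          _ = 2 * π * (√k * √(N - k : ℕ)) := by ring

end Binomial

theorem sum_filter_add_eq_mul_le {β γ : Type*} [Fintype β] [Fintype γ] {w₁ : β → ℝ} {w₂ : γ → ℝ}
    (hw₂ : ∀ v, 0 ≤ w₂ v) (hw₂_sum : ∑ v, w₂ v = 1) (f : β → ℤ) (g : γ → ℤ) {M : ℝ}
    (hM : ∀ z, ∑ u with f u = z, w₁ u ≤ M) (y : ℤ) :
    ∑ x : β × γ with f x.1 + g x.2 = y, w₁ x.1 * w₂ x.2 ≤ M := by
  rw [sum_filter, Fintype.sum_prod_type, sum_comm]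
  calc ∑ v, ∑ u, (if f u + g v = y then w₁ u * w₂ v else 0)
      = ∑ v, w₂ v * ∑ u with f u = y - g v, w₁ u := by
        refine sum_congr rfl fun v _ => ?_
        rw [sum_filter, mul_sum]
        refine sum_congr rfl fun u _ => ?_
        simp only [eq_sub_iff_add_eq]
        split <;> ring
    _ ≤ ∑ v, w₂ v * M := sum_le_sum fun v _ => mul_le_mul_of_nonneg_left (hM _) (hw₂ v)
    _ = M := by rw [← sum_mul, hw₂_sum, one_mul]

theorem sum_filter_natAbs_lt_le {ι : Type*} [Fintype ι] {w : ι → ℝ} (hw : ∀ x, 0 ≤ w x)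
    (g : ι → ℤ) {M : ℝ} (hM : ∀ y, ∑ x with g x = y, w x ≤ M) {t : ℝ} (ht : 1 ≤ t) :
    ∑ x with ((g x).natAbs : ℝ) < t, w x ≤ 3 * t * M := by
  set T := Ioo (-⌈t⌉) ⌈t⌉
  have hmaps : ∀ x ∈ ({x | ((g x).natAbs : ℝ) < t} : Finset ι), g x ∈ T := by
    intro x hx
    rw [mem_filter] at hx
    have h : ((g x).natAbs : ℝ) < ⌈t⌉ := hx.2.trans_le (Int.le_ceil t)
    rw [← Int.cast_natCast, Int.cast_lt, Int.natCast_natAbs] at h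
    exact mem_Ioo.2 (abs_lt.1 h)
  have hM0 : 0 ≤ M := (sum_nonneg fun x _ => hw x).trans (hM 0)
  have hcard : (#T : ℝ) ≤ 3 * t := by
    have h1 : (1 : ℤ) ≤ ⌈t⌉ := Int.one_le_ceil_iff.2 (by linarith)
    have h2 : (⌈t⌉ : ℝ) < t + 1 := Int.ceil_lt_add_one t
    rw [Int.card_Ioo, show ⌈t⌉ - -⌈t⌉ - 1 = 2 * ⌈t⌉ - 1 by ring,
      ← Int.cast_natCast, Int.toNat_of_nonneg (by omega)]
    push_cast
    linarith
  calc ∑ x with ((g x).natAbs : ℝ) < t, w x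
      = ∑ y ∈ T, ∑ x ∈ ({x | ((g x).natAbs : ℝ) < t} : Finset ι) with g x = y, w x :=
        (sum_fiberwise_of_maps_to hmaps _).symm
    _ ≤ ∑ y ∈ T, ∑ x with g x = y, w x :=
        sum_le_sum fun y _ => sum_le_sum_of_subset_of_nonneg
          (filter_subset_filter _ (filter_subset _ _)) fun x _ _ => hw x
    _ ≤ ∑ _y ∈ T, M := sum_le_sum fun y _ => hM y
    _ = #T * M := by rw [sum_const, nsmul_eq_mul]
    _ ≤ 3 * t * M := mul_le_mul_of_nonneg_right hcard hM0

section Cube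

variable {α : Type*} [Fintype α] {p : ℝ}

noncomputable def bernoulliWeight (p : ℝ) (r : α → Bool) : ℝ :=
  ∏ k, if r k then p else 1 - p

def numTrue (r : α → Bool) : ℕ :=
  #{k | r k = true}

theorem bernoulliWeight_nonneg (hp0 : 0 ≤ p) (hp1 : p ≤ 1) (r : α → Bool) :
    0 ≤ bernoulliWeight p r :=
  prod_nonneg fun k _ => by split <;> linarith

theorem bernoulliWeight_eq (p : ℝ) (r : α → Bool) :
    bernoulliWeight p r = p ^ numTrue r * (1 - p) ^ (Fintype.card α - numTrue r) := by
  classical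
  rw [bernoulliWeight, prod_ite, prod_const, prod_const, numTrue, filter_not,
    card_sdiff_of_subset (filter_subset _ _), Finset.card_univ]

theorem bernoulliWeight_eq_mul_restrict (p : ℝ) (P : α → Prop) [DecidablePred P] (r : α → Bool) :
    bernoulliWeight p r
      = bernoulliWeight p (fun k : {k // P k} => r k)
        * bernoulliWeight p (fun k : {k // ¬P k} => r k) :=
  (Fintype.prod_subtype_mul_prod_subtype P _).symm

theorem bernoulliWeight_mul_neg_one_pow (p : ℝ) (r : α → Bool) :
    bernoulliWeight p r * (-1) ^ numTrue r = ∏ k, if r k then -p else 1 - p := by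
  have hsign : ((-1 : ℝ) ^ numTrue r) = ∏ k, if r k then -1 else 1 := by
    simp [numTrue, prod_ite]
  rw [hsign, bernoulliWeight, ← prod_mul_distrib]
  exact prod_congr rfl fun k _ => by split <;> ring

variable [DecidableEq α]

theorem sum_bernoulliWeight (p : ℝ) : ∑ r : α → Bool, bernoulliWeight p r = 1 := by
  simp only [bernoulliWeight]
  rw [← (Fintype.prod_sum fun _ (b : Bool) => if b then p else 1 - p)]
  simp

theorem sum_bernoulliWeight_mul_neg_one_pow (p : ℝ) :
    ∑ r : α → Bool, bernoulliWeight p r * (-1) ^ numTrue r = (1 - 2 * p) ^ Fintype.card α := by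
  rw [sum_congr rfl fun r _ => bernoulliWeight_mul_neg_one_pow p r,
    ← (Fintype.prod_sum fun _ (b : Bool) => if b then -p else 1 - p)]
  simp only [Fintype.sum_bool, if_true, Bool.false_eq_true, if_false, prod_const, card_univ]
  ring_nf

theorem sum_bernoulliWeight_even (p : ℝ) :
    ∑ r : α → Bool with Even (numTrue r), bernoulliWeight p r
      = (1 + (1 - 2 * p) ^ Fintype.card α) / 2 := by
  have hparity (r : α → Bool) : (if Even (numTrue r) then bernoulliWeight p r else 0)
      = (bernoulliWeight p r + bernoulliWeight p r * (-1) ^ numTrue r) / 2 := by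
    rcases Nat.even_or_odd (numTrue r) with h | h
    · rw [if_pos h, h.neg_one_pow]; ring
    · rw [if_neg (Nat.not_even_iff_odd.2 h), h.neg_one_pow]; ring
  rw [sum_filter, sum_congr rfl fun r _ => hparity r, ← sum_div, sum_add_distrib,
    sum_bernoulliWeight, sum_bernoulliWeight_mul_neg_one_pow]

theorem card_filter_numTrue_eq (j : ℕ) :
    #{r : α → Bool | numTrue r = j} = (Fintype.card α).choose j := by
  classical
  rw [← Finset.card_univ, ← card_powersetCard]
  refine card_nbij' (fun r => ({k | r k = true} : Finset α)) (fun s k => decide (k ∈ s)) ?_ ?_ ?_ ?_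
  · intro r hr
    rw [mem_coe, mem_filter] at hr
    exact mem_coe.2 (mem_powersetCard.2 ⟨subset_univ _, hr.2⟩)
  · intro s hs
    rw [mem_coe, mem_powersetCard] at hs
    refine mem_coe.2 (mem_filter.2 ⟨mem_univ _, ?_⟩)
    simpa [numTrue] using hs.2
  · intro r _
    ext k; simp
  · intro s _
    ext k; simp

theorem sum_bernoulliWeight_numTrue_eq (p : ℝ) (j : ℕ) :
    ∑ r : α → Bool with numTrue r = j, bernoulliWeight p r
      = binomialTerm (Fintype.card α) p j := by
  rw [sum_congr rfl fun r hr => by rw [bernoulliWeight_eq, (mem_filter.1 hr).2], sum_const,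
    card_filter_numTrue_eq, binomialTerm, nsmul_eq_mul, mul_assoc]

theorem sum_bernoulliWeight_filter_add_eq_le (hp0 : 0 ≤ p) (hp1 : p ≤ 1) (P : α → Prop)
    [DecidablePred P] (f : ({k // P k} → Bool) → ℤ) (g : ({k // ¬P k} → Bool) → ℤ) {M : ℝ}
    (hM : ∀ z, ∑ u with f u = z, bernoulliWeight p u ≤ M) (y : ℤ) :
    ∑ r : α → Bool with f (fun k => r k) + g (fun k => r k) = y, bernoulliWeight p r ≤ M := by
  calc ∑ r : α → Bool with f (fun k => r k) + g (fun k => r k) = y, bernoulliWeight p r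
      = ∑ x : ({k // P k} → Bool) × ({k // ¬P k} → Bool) with f x.1 + g x.2 = y,
          bernoulliWeight p x.1 * bernoulliWeight p x.2 := by
        rw [sum_filter, sum_filter, ← (Equiv.piEquivPiSubtypeProd P fun _ => Bool).sum_comp]
        refine sum_congr rfl fun r _ => ?_
        rw [bernoulliWeight_eq_mul_restrict p P r]
        rfl
    _ ≤ M :=
        sum_filter_add_eq_mul_le (bernoulliWeight_nonneg hp0 hp1) (sum_bernoulliWeight p) f g hM y

theorem sum_bernoulliWeight_sign_mul_numTrue_eq_le (hp0 : 0 < p) (hp1 : p < 1)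
    (hNp : 2 ≤ Fintype.card α * p) (hNq : 2 ≤ Fintype.card α * (1 - p)) {ε : ℤ}
    (hε : ε = 1 ∨ ε = -1) (z : ℤ) :
    ∑ u : α → Bool with ε * numTrue u = z, bernoulliWeight p u
      ≤ 1 / √(Fintype.card α * p * (1 - p)) := by
  have hsub : ({u | ε * numTrue u = z} : Finset (α → Bool))
      ⊆ ({u | numTrue u = (ε * z).toNat} : Finset _) := by
    intro u hu
    simp only [mem_filter, mem_univ, true_and] at hu ⊢
    rcases hε with rfl | rfl <;> omega
  refine (sum_le_sum_of_subset_of_nonneg hsub fun u _ _ =>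
    bernoulliWeight_nonneg hp0.le hp1.le u).trans ?_
  rw [sum_bernoulliWeight_numTrue_eq]
  exact binomialTerm_le_inv_sqrt hp0 hp1 hNp hNq _

end Cube

section SignedSum

variable {α : Type*} [Fintype α] {p : ℝ}

def signedSum (ψ r : α → Bool) : ℤ :=
  ∑ k, if r k then (if ψ k then 1 else -1) else 0

theorem signedSum_eq (ψ r : α → Bool) (b : Bool) :
    signedSum ψ r = (if b then 1 else -1) * numTrue (fun k : {k // ψ k = b} => r k)
      + signedSum (fun k : {k // ¬ψ k = b} => ψ k) (fun k => r k) := by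
  rw [signedSum, ← Fintype.sum_subtype_add_sum_subtype (fun k => ψ k = b)]
  congr 1
  simp_rw [fun k : {k // ψ k = b} => k.2]
  simp [sum_ite, numTrue, mul_comm]

theorem exists_card_le_two_mul_card_subtype_eq (ψ : α → Bool) :
    ∃ b, Fintype.card α ≤ 2 * Fintype.card {k // ψ k = b} := by
  have h := Fintype.card_subtype_compl (fun k => ψ k = true)
  simp only [Bool.not_eq_true] at h
  have hle := Fintype.card_subtype_le (fun k => ψ k = true)
  by_cases hb : Fintype.card α ≤ 2 * Fintype.card {k // ψ k = true}
  · exact ⟨true, hb⟩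
  · exact ⟨false, by omega⟩

theorem sum_bernoulliWeight_signedSum_eq_le [DecidableEq α] (hp0 : 0 < p) (hp1 : p < 1)
    (hnp : 4 ≤ Fintype.card α * p) (hnq : 4 ≤ Fintype.card α * (1 - p)) (ψ : α → Bool) (y : ℤ) :
    ∑ r : α → Bool with signedSum ψ r = y, bernoulliWeight p r
      ≤ √2 / √(Fintype.card α * p * (1 - p)) := by
  obtain ⟨b, hb⟩ := exists_card_le_two_mul_card_subtype_eq ψ
  have hb' : (Fintype.card α : ℝ) ≤ 2 * Fintype.card {k // ψ k = b} := by exact_mod_cast hb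
  have hq : 0 < 1 - p := by linarith
  have hNp : 2 ≤ (Fintype.card {k // ψ k = b} : ℝ) * p := by nlinarith
  have hNq : 2 ≤ (Fintype.card {k // ψ k = b} : ℝ) * (1 - p) := by nlinarith
  rw [filter_congr fun r _ => by rw [signedSum_eq ψ r b]]
  refine (sum_bernoulliWeight_filter_add_eq_le hp0.le hp1.le _
    (fun u => (if b then 1 else -1) * numTrue u) _
    (sum_bernoulliWeight_sign_mul_numTrue_eq_le hp0 hp1 hNp hNq (by cases b <;> simp)) y).trans ?_
  rw [div_le_div_iff₀ (Real.sqrt_pos.2 (mul_pos (by linarith) hq))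
    (Real.sqrt_pos.2 (mul_pos (by linarith) hq)), one_mul, ← Real.sqrt_mul zero_le_two]
  exact Real.sqrt_le_sqrt (by nlinarith [mul_pos hp0 hq])

end SignedSum

section Measure

variable {p : ℝ}

instance (p : ℝ) : IsFiniteMeasure (bernoulliMeasure p) :=
  ⟨by simp [_root_.bernoulliMeasure, ENNReal.add_lt_top]⟩

theorem isProbabilityMeasure_bernoulliMeasure (hp0 : 0 ≤ p) (hp1 : p ≤ 1) :
    IsProbabilityMeasure (bernoulliMeasure p) := by
  constructor
  simp only [_root_.bernoulliMeasure, Measure.coe_add, Measure.coe_smul, Pi.add_apply,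
    Pi.smul_apply, measure_univ, smul_eq_mul, mul_one]
  rw [← ENNReal.ofReal_add hp0 (sub_nonneg.2 hp1)]
  simp

theorem bernoulliMeasure_singleton (p : ℝ) (b : Bool) :
    bernoulliMeasure p {b} = ENNReal.ofReal (if b then p else 1 - p) := by
  cases b <;> simp [_root_.bernoulliMeasure]

theorem pi_bernoulliMeasure_finset {α : Type*} [Fintype α] (hp0 : 0 ≤ p) (hp1 : p ≤ 1)
    (S : Finset (α → Bool)) :
    Measure.pi (fun _ : α => bernoulliMeasure p) S
      = ENNReal.ofReal (∑ r ∈ S, bernoulliWeight p r) := by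
  rw [← sum_measure_singleton, ENNReal.ofReal_sum_of_nonneg fun r _ =>
    bernoulliWeight_nonneg hp0 hp1 r]
  refine sum_congr rfl fun r _ => ?_
  rw [Measure.pi_singleton, bernoulliWeight, ENNReal.ofReal_prod_of_nonneg fun k _ => by
    split <;> linarith]
  exact prod_congr rfl fun k _ => bernoulliMeasure_singleton p (r k)

theorem edgeIndepModel_forall_mem {n m : ℕ} (R : Set (Fin n → Bool)) :
    edgeIndepModel n m p {A | ∀ i, A i ∈ R} = Measure.pi (fun _ => bernoulliMeasure p) R ^ m := by
  have hR : {A : Fin m → Fin n → Bool | ∀ i, A i ∈ R} = Set.univ.pi fun _ => R := by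
    ext A; simp
  rw [edgeIndepModel, hR, Measure.pi_pi, prod_const, Finset.card_univ, Fintype.card_fin]

theorem isProbabilityMeasure_edgeIndepModel {n m : ℕ} (hp0 : 0 ≤ p) (hp1 : p ≤ 1) :
    IsProbabilityMeasure (edgeIndepModel n m p) := by
  have := isProbabilityMeasure_bernoulliMeasure hp0 hp1
  rw [edgeIndepModel]
  infer_instance

end Measure

theorem tendsto_measure_atTop_one {Ω : ℕ → Type*} [∀ n, MeasurableSpace (Ω n)]
    {μ : ∀ n, Measure (Ω n)} {s : ∀ n, Set (Ω n)} {g : ℕ → ℝ≥0∞}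
    (hμ : ∀ᶠ n in atTop, IsProbabilityMeasure (μ n)) (hg : Tendsto g atTop (nhds 0))
    (hle : ∀ᶠ n in atTop, μ n (s n)ᶜ ≤ g n) :
    Tendsto (fun n => μ n (s n)) atTop (nhds 1) := by
  have hlower : Tendsto (fun n => 1 - g n) atTop (nhds 1) := by
    simpa [Function.comp_def] using
      (ENNReal.continuous_sub_left ENNReal.one_ne_top).tendsto 0 |>.comp hg
  refine tendsto_of_tendsto_of_tendsto_of_le_of_le' hlower tendsto_const_nhds ?_ ?_
  · filter_upwards [hμ, hle] with n _ hn
    calc 1 - g n ≤ μ n Set.univ - μ n (s n)ᶜ := by rw [measure_univ]; exact tsub_le_tsub_left hn 1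
      _ ≤ μ n (s n) := by
          rw [tsub_le_iff_right, ← Set.union_compl_self (s n)]
          exact measure_union_le _ _
  · filter_upwards [hμ] with n _
    exact prob_le_one


section Discrepancy

theorem even_signedSum_add_numTrue {α : Type*} [Fintype α] (ψ r : α → Bool) :
    Even (signedSum ψ r + numTrue r) := by
  rw [signedSum, numTrue, natCast_card_filter, ← sum_add_distrib]
  exact even_sum _ fun k _ => by cases r k <;> cases ψ k <;> decide

theorem exists_forall_natAbs_signedSum_le_disc {m n : ℕ} (A : Fin m → Fin n → Bool) :
    ∃ ψ, ∀ i, (signedSum ψ (A i)).natAbs ≤ disc A := by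
  obtain ⟨ψ, hψ⟩ : disc A ∈ Set.range fun ψ : Fin n → Bool =>
      univ.sup fun i => (signedSum ψ (A i)).natAbs :=
    Nat.sInf_mem (Set.range_nonempty _)
  exact ⟨ψ, fun i => hψ ▸ le_sup (f := fun i => (signedSum ψ (A i)).natAbs) (mem_univ i)⟩

theorem even_numTrue_of_disc_eq_zero {m n : ℕ} {A : Fin m → Fin n → Bool} (h : disc A = 0)
    (i : Fin m) : Even (numTrue (A i)) := by
  obtain ⟨ψ, hψ⟩ := exists_forall_natAbs_signedSum_le_disc A
  have h0 : signedSum ψ (A i) = 0 := Int.natAbs_eq_zero.1 (Nat.le_zero.1 (h ▸ hψ i))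
  simpa [h0, Int.even_coe_nat] using even_signedSum_add_numTrue ψ (A i)

end Discrepancy

section Bounds

variable {n m : ℕ} {p : ℝ}

theorem one_sub_two_mul_pow_le_half (hnp : 1 ≤ n * p)
    (hnq : 1 ≤ n * (1 - p)) : (1 - 2 * p) ^ n ≤ 1 / 2 := by
  have key : ∀ x : ℝ, 0 ≤ 1 - 2 * x → 1 ≤ n * x → (1 - 2 * x) ^ n ≤ 1 / 2 := fun x hx hnx =>
    calc (1 - 2 * x) ^ n ≤ exp (-2 * x) ^ n :=
          pow_le_pow_left₀ hx (by linarith [Real.add_one_le_exp (-2 * x)]) n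
      _ = exp (-2 * (n * x)) := by rw [← Real.exp_nat_mul]; ring_nf
      _ ≤ exp (-2) := Real.exp_le_exp.2 (by linarith)
      _ ≤ 1 / 2 := by
          rw [Real.exp_neg, one_div]
          exact inv_anti₀ two_pos (by linarith [Real.add_one_le_exp (2 : ℝ)])
  refine (le_abs_self _).trans ?_
  rw [abs_pow]
  rcases le_total p (1 / 2) with hp | hp
  · rw [abs_of_nonneg (by linarith)]
    exact key p (by linarith) hnp
  · rw [abs_of_nonpos (by linarith), show -(1 - 2 * p) = 1 - 2 * (1 - p) by ring]
    exact key (1 - p) (by linarith) hnq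

theorem edgeIndepModel_disc_eq_zero_le (hp0 : 0 ≤ p) (hp1 : p ≤ 1) :
    edgeIndepModel n m p {A | disc A = 0} ≤ ENNReal.ofReal ((1 + (1 - 2 * p) ^ n) / 2) ^ m := by
  calc edgeIndepModel n m p {A | disc A = 0}
      ≤ edgeIndepModel n m p
          {A | ∀ i, A i ∈ (({r | Even (numTrue r)} : Finset (Fin n → Bool)) : Set _)} :=
        measure_mono fun A hA i => by simpa using even_numTrue_of_disc_eq_zero hA i
    _ = _ := by
        rw [edgeIndepModel_forall_mem, pi_bernoulliMeasure_finset hp0 hp1, sum_bernoulliWeight_even,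
          Fintype.card_fin]

theorem edgeIndepModel_disc_lt_le {t : ℝ} (hp0 : 0 < p) (hp1 : p < 1) (hnp : 4 ≤ n * p)
    (hnq : 4 ≤ n * (1 - p)) (ht : 1 ≤ t) :
    edgeIndepModel n m p {A | (disc A : ℝ) < t}
      ≤ 2 ^ n * ENNReal.ofReal (3 * t * (√2 / √(n * p * (1 - p)))) ^ m := by
  let R (ψ : Fin n → Bool) : Finset (Fin n → Bool) := {r | ((signedSum ψ r).natAbs : ℝ) < t}
  have hsub : {A : Fin m → Fin n → Bool | (disc A : ℝ) < t}
      ⊆ ⋃ ψ, {A | ∀ i, A i ∈ (R ψ : Set (Fin n → Bool))} := by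
    intro A hA
    obtain ⟨ψ, hψ⟩ := exists_forall_natAbs_signedSum_le_disc A
    refine Set.mem_iUnion.2 ⟨ψ, fun i => ?_⟩
    simpa [R] using (Nat.cast_le.2 (hψ i)).trans_lt (show (disc A : ℝ) < t from hA)
  calc edgeIndepModel n m p {A | (disc A : ℝ) < t}
      ≤ ∑ ψ, edgeIndepModel n m p {A | ∀ i, A i ∈ (R ψ : Set (Fin n → Bool))} :=
        (measure_mono hsub).trans (measure_iUnion_fintype_le _ _)
    _ ≤ ∑ _ψ : Fin n → Bool, ENNReal.ofReal (3 * t * (√2 / √(n * p * (1 - p)))) ^ m := by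
        gcongr with ψ
        rw [edgeIndepModel_forall_mem, pi_bernoulliMeasure_finset hp0.le hp1.le]
        gcongr
        have h := sum_filter_natAbs_lt_le (bernoulliWeight_nonneg hp0.le hp1.le) _
          (sum_bernoulliWeight_signedSum_eq_le hp0 hp1 (by simpa) (by simpa) ψ) ht
        rwa [Fintype.card_fin] at h
    _ = _ := by
        rw [sum_const, Finset.card_univ, Fintype.card_fun, Fintype.card_bool, Fintype.card_fin,
          nsmul_eq_mul]
        push_cast
        rfl

theorem two_pow_mul_rpow_neg_div_div_two_pow (hm : m ≠ 0) :
    (2 : ℝ) ^ n * ((2 : ℝ) ^ (-(n : ℝ) / m) / 2) ^ m = (1 / 2) ^ m := by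
  rw [div_pow, ← Real.rpow_natCast ((2 : ℝ) ^ _), ← Real.rpow_mul zero_le_two,
    div_mul_cancel₀ _ (Nat.cast_ne_zero.2 hm), Real.rpow_neg zero_le_two, Real.rpow_natCast]
  field_simp
  rw [← mul_pow]
  norm_num

theorem three_mul_sqrt_one_sub_div_nine_mul_le {c x : ℝ} (hx : 0 ≤ x) (hp0 : 0 < p)
    (hpc : p ≤ c) (hc1 : c < 1) (hnp : 0 < n * p) :
    3 * (√(1 - c) / 9 * (x * √(p * n))) * (√2 / √(n * p * (1 - p))) ≤ x / 2 := by
  have hs : √(n * p * (1 - p)) = √(p * n) * √(1 - p) := by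
    rw [← Real.sqrt_mul (by positivity)]; ring_nf
  have hpn : 0 < √(p * n) := Real.sqrt_pos.2 (by linarith)
  have hq : 0 < √(1 - p) := Real.sqrt_pos.2 (by linarith)
  have hκ : 3 * (√(1 - c) / 9) * √2 ≤ √(1 - p) / 2 := by
    have h1 : √(1 - c) ≤ √(1 - p) := Real.sqrt_le_sqrt (by linarith)
    have h2 : √2 ≤ 3 / 2 := Real.sqrt_le_iff.2 ⟨by norm_num, by norm_num⟩
    nlinarith [Real.sqrt_nonneg 2, Real.sqrt_nonneg (1 - c)]
  calc 3 * (√(1 - c) / 9 * (x * √(p * n))) * (√2 / √(n * p * (1 - p)))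
      = x * (3 * (√(1 - c) / 9) * √2) / √(1 - p) := by
        rw [hs]; field_simp
    _ ≤ x * (√(1 - p) / 2) / √(1 - p) := by gcongr
    _ = x / 2 := by field_simp

theorem edgeIndepModel_disc_lt_le_pow {c : ℝ} (hm : m ≠ 0) (hp0 : 0 < p) (hpc : p ≤ c)
    (hc1 : c < 1) (hnp : 4 ≤ n * p) (hnq : 4 ≤ n * (1 - p)) :
    edgeIndepModel n m p
        {A | (disc A : ℝ) < √(1 - c) / 9 * max ((2 : ℝ) ^ (-(n : ℝ) / m) * √(p * n)) 1}
      ≤ ENNReal.ofReal (3 / 4) ^ m := by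
  have hp1 : p < 1 := hpc.trans_lt hc1
  have hκ1 : √(1 - c) / 9 ≤ 1 := by
    have : √(1 - c) ≤ 1 := Real.sqrt_le_one.2 (by linarith)
    linarith
  set κ := √(1 - c) / 9
  set a := (2 : ℝ) ^ (-(n : ℝ) / m) * √(p * n)
  rcases le_or_gt (κ * max a 1) 1 with ht | ht
  · calc _ ≤ edgeIndepModel n m p {A | disc A = 0} := measure_mono fun A hA =>
            Nat.lt_one_iff.1 (by exact_mod_cast (show (disc A : ℝ) < _ from hA).trans_le ht)
      _ ≤ _ := edgeIndepModel_disc_eq_zero_le hp0.le hp1.le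
      _ ≤ _ := by
          refine pow_le_pow_left' (ENNReal.ofReal_le_ofReal ?_) m
          linarith [one_sub_two_mul_pow_le_half (n := n) (p := p) (by linarith) (by linarith)]
  have ha : 1 ≤ a := by
    by_contra! ha
    rw [max_eq_right ha.le, mul_one] at ht
    linarith
  rw [max_eq_left ha] at ht ⊢
  calc _ ≤ 2 ^ n * ENNReal.ofReal (3 * (κ * a) * (√2 / √(n * p * (1 - p)))) ^ m :=
        edgeIndepModel_disc_lt_le hp0 hp1 hnp hnq ht.le
    _ ≤ 2 ^ n * ENNReal.ofReal ((2 : ℝ) ^ (-(n : ℝ) / m) / 2) ^ m := by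
        gcongr
        exact three_mul_sqrt_one_sub_div_nine_mul_le (by positivity) hp0 hpc hc1 (by linarith)
    _ = ENNReal.ofReal ((2 : ℝ) ^ n * ((2 : ℝ) ^ (-(n : ℝ) / m) / 2) ^ m) := by
        rw [ENNReal.ofReal_mul (by positivity), ENNReal.ofReal_pow (zero_le_two (α := ℝ)),
          ENNReal.ofReal_pow (by positivity : (0 : ℝ) ≤ (2 : ℝ) ^ (-(n : ℝ) / m) / 2),
          ENNReal.ofReal_ofNat]
    _ ≤ _ := by
        rw [two_pow_mul_rpow_neg_div_div_two_pow hm, ← ENNReal.ofReal_pow (by norm_num)]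
        exact ENNReal.ofReal_le_ofReal (pow_le_pow_left₀ (by norm_num) (by norm_num) m)

end Bounds

end DiscLowerBound

open DiscLowerBound in
theorem edge_independent_lower_bound_sparse_general (m : ℕ → ℕ) (p : ℕ → ℝ)
    (hpn : Tendsto (fun n => p n * n) atTop atTop)
    (hpm : Tendsto (fun n => p n * m n) atTop atTop)
    (hpc : ∃ c : ℝ, c < 1 ∧ ∀ n, p n ≤ c) :
    ∃ κ : ℝ, 0 < κ ∧
      Tendsto (fun n =>
          edgeIndepModel n (m n) (p n)
            {A | κ * max ((2 : ℝ) ^ (-(n : ℝ) / (m n : ℝ)) * Real.sqrt (p n * n)) 1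
              ≤ (disc A : ℝ)})
        atTop (nhds 1) := by
  obtain ⟨c, hc1, hpc⟩ := hpc
  refine ⟨√(1 - c) / 9, div_pos (Real.sqrt_pos.2 (sub_pos.2 hc1)) (by norm_num), ?_⟩
  have hm : Tendsto m atTop atTop := by
    refine tendsto_natCast_atTop_iff.1 (tendsto_atTop_mono (fun n => ?_) hpm)
    exact mul_le_of_le_one_left (Nat.cast_nonneg _) ((hpc n).trans hc1.le)
  have hnq : Tendsto (fun n : ℕ => n * (1 - p n)) atTop atTop :=
    tendsto_atTop_mono (fun n => mul_le_mul_of_nonneg_left (by linarith [hpc n]) n.cast_nonneg)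
      (tendsto_natCast_atTop_atTop.atTop_mul_const (sub_pos.2 hc1))
  have hp0 : ∀ᶠ n in atTop, 0 < p n := by
    filter_upwards [hpn.eventually_gt_atTop 0] with n hn
    exact pos_of_mul_pos_left hn n.cast_nonneg
  refine tendsto_measure_atTop_one (g := fun n => ENNReal.ofReal (3 / 4) ^ m n) ?_
    ((ENNReal.tendsto_pow_atTop_nhds_zero_of_lt_one (by norm_num)).comp hm) ?_
  · filter_upwards [hp0] with n hn
    exact isProbabilityMeasure_edgeIndepModel hn.le ((hpc n).trans hc1.le)
  · filter_upwards [hm.eventually_ne_atTop 0, hp0, hpn.eventually_ge_atTop 4,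
      hnq.eventually_ge_atTop 4] with n hmn hpn0 hnp hnq
    simpa [Set.compl_ofPred] using
      edgeIndepModel_disc_lt_le_pow hmn hpn0 (hpc n) hc1 (by linarith) hnq

/-- Theorem 1 (sparse case, `m = O(n)`) of "The Phase Transition of Discrepancy in
Random Hypergraphs": w.h.p. `disc(H) = Ω(max{2^{-n/m} √(pn), 1})` for
`H ∼ ℍ(n, m, p)`. -/
theorem edge_independent_lower_bound_sparse (m : ℕ → ℕ) (p : ℕ → ℝ)
    (hp0 : ∀ n, 0 ≤ p n)
    (hpn : Tendsto (fun n => p n * n) atTop atTop)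
    (hpm : Tendsto (fun n => p n * m n) atTop atTop)
    (hpc : ∃ c : ℝ, c < 1 ∧ ∀ n, p n ≤ c)
    (hmn : ∃ C : ℝ, ∀ n, (m n : ℝ) ≤ C * n) :
    ∃ κ : ℝ, 0 < κ ∧
      Tendsto (fun n =>
          edgeIndepModel n (m n) (p n)
            {A | κ * max ((2 : ℝ) ^ (-(n : ℝ) / (m n : ℝ)) * Real.sqrt (p n * n)) 1
              ≤ (disc A : ℝ)})
        atTop (nhds 1) :=
  edge_independent_lower_bound_sparse_general m p hpn hpm hpc
end

section
/- Let m = m(n) and p = p(n) satisfy m(n) → ∞, p(n)·n → ∞, and p bounded away from 1 (there is a constant c < 1 with p(n) ≤ c for all n). Then for H drawn from the edge-independent model H(n, m(n), p(n)), the probability that disc(H) ≥ 1 tends to 1 as n → ∞. -/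
open MeasureTheory ProbabilityTheory Filter Real
open scoped ENNReal NNReal

/-! A colouring can only balance an edge of even size, because the signed sum over an edge has
the parity of the edge's size. In `H(n,m,p)` the rows are independent, and a row has even size with
probability `(1 + (1 - 2p)^n) / 2`; when `pn → ∞` and `p ≤ c < 1` this is eventually at most
`3/4`, so all `m` rows are even with probability at most `(3/4)^m → 0`. -/

open Finset

section Bernoulli

variable {p : ℝ}

lemma bernoulliMeasure_singleton (p : ℝ) (b : Bool) :
    bernoulliMeasure p {b} = ENNReal.ofReal (if b then p else 1 - p) := by
  cases b <;> simp [_root_.bernoulliMeasure]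

lemma isProbabilityMeasure_bernoulliMeasure (h0 : 0 ≤ p) (h1 : p ≤ 1) :
    IsProbabilityMeasure (bernoulliMeasure p) := by
  constructor
  simp [_root_.bernoulliMeasure, ← ENNReal.ofReal_add h0 (sub_nonneg.2 h1)]

lemma pi_bernoulliMeasure_singleton {n : ℕ} (h0 : 0 ≤ p) (h1 : p ≤ 1) (v : Fin n → Bool) :
    Measure.pi (fun _ : Fin n => bernoulliMeasure p) {v}
      = ENNReal.ofReal (∏ k, if v k then p else 1 - p) := by
  have := isProbabilityMeasure_bernoulliMeasure h0 h1
  rw [← Set.univ_pi_singleton v, Measure.pi_pi, ENNReal.ofReal_prod_of_nonneg]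
  · simp only [bernoulliMeasure_singleton]
  · intro k _
    split <;> linarith

lemma neg_one_pow_mul_prod_bernoulli {n : ℕ} (p : ℝ) (v : Fin n → Bool) :
    (-1 : ℝ) ^ #{k | v k} * ∏ k, (if v k then p else 1 - p)
      = ∏ k, (if v k then -p else 1 - p) := by
  rw [← prod_const, prod_filter, ← prod_mul_distrib]
  refine prod_congr rfl fun k _ => ?_
  cases v k <;> simp

lemma sum_prod_bernoulli_even (n : ℕ) (p : ℝ) :
    ∑ v : Fin n → Bool with Even #{k | v k}, ∏ k, (if v k then p else 1 - p)
      = (1 + (1 - 2 * p) ^ n) / 2 := by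
  -- `(1 + (-1)^j) / 2` is the indicator of `Even j`, and both resulting sums factor over `k`.
  calc ∑ v : Fin n → Bool with Even #{k | v k}, ∏ k, (if v k then p else 1 - p)
      = ∑ v : Fin n → Bool,
          (∏ k, (if v k then p else 1 - p) + ∏ k, (if v k then -p else 1 - p)) / 2 := by
        rw [sum_filter]
        refine sum_congr rfl fun v _ => ?_
        rw [← neg_one_pow_mul_prod_bernoulli]
        rcases Nat.even_or_odd #{k | v k} with h | h
        · rw [if_pos h, h.neg_one_pow]; ring
        · rw [if_neg (Nat.not_even_iff_odd.2 h), h.neg_one_pow]; ring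
    _ = ((∑ b : Bool, if b then p else 1 - p) ^ n
          + (∑ b : Bool, if b then -p else 1 - p) ^ n) / 2 := by
        rw [← sum_div, sum_add_distrib, Fintype.sum_pow, Fintype.sum_pow]
    _ = (1 + (1 - 2 * p) ^ n) / 2 := by
        simp only [Fintype.sum_bool, if_true, if_false, Bool.false_eq_true]
        ring_nf

lemma pi_bernoulliMeasure_even (n : ℕ) (h0 : 0 ≤ p) (h1 : p ≤ 1) :
    Measure.pi (fun _ : Fin n => bernoulliMeasure p) {v | Even #{k | v k}}
      = ENNReal.ofReal ((1 + (1 - 2 * p) ^ n) / 2) := by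
  have hset : {v : Fin n → Bool | Even #{k | v k}}
      = ↑({v | Even #{k | v k}} : Finset (Fin n → Bool)) := by
    ext; simp
  rw [← sum_prod_bernoulli_even, ENNReal.ofReal_sum_of_nonneg, hset, ← sum_measure_singleton]
  · exact sum_congr rfl fun v _ => pi_bernoulliMeasure_singleton h0 h1 v
  · intro v _
    exact prod_nonneg fun k _ => by split <;> linarith

end Bernoulli

lemma one_le_disc_of_odd_row {m n : ℕ} (A : Fin m → Fin n → Bool) (i : Fin m)
    (hi : Odd #{k | A i k}) : 1 ≤ disc A := by
  refine le_ciInf fun ψ => le_trans ?_ (le_sup (mem_univ i)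
    (f := fun i => (∑ k, if A i k then (if ψ k then (1 : ℤ) else -1) else 0).natAbs))
  rw [Nat.one_le_iff_ne_zero, Ne, Int.natAbs_eq_zero]
  intro h
  have := congrArg (Int.cast : ℤ → ZMod 2) h
  push_cast at this
  simp only [CharTwo.neg_eq, ite_self, sum_boole, ZMod.natCast_eq_zero_iff_even] at this
  exact Nat.not_even_iff_odd.2 hi this

section EdgeIndependentModel

variable {p : ℝ}

lemma isProbabilityMeasure_edgeIndepModel (n m : ℕ) (h0 : 0 ≤ p) (h1 : p ≤ 1) :
    IsProbabilityMeasure (edgeIndepModel n m p) := by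
  have := isProbabilityMeasure_bernoulliMeasure h0 h1
  unfold edgeIndepModel
  infer_instance

lemma edgeIndepModel_all_rows_even (n m : ℕ) (h0 : 0 ≤ p) (h1 : p ≤ 1) :
    edgeIndepModel n m p {A | ∀ i, Even #{k | A i k}}
      = ENNReal.ofReal ((1 + (1 - 2 * p) ^ n) / 2) ^ m := by
  have := isProbabilityMeasure_bernoulliMeasure h0 h1
  have hset : {A : Fin m → Fin n → Bool | ∀ i, Even #{k | A i k}}
      = Set.univ.pi fun _ => {v | Even #{k | v k}} := by
    ext; simp
  rw [edgeIndepModel, hset, Measure.pi_pi]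
  simp [pi_bernoulliMeasure_even n h0 h1]

lemma one_sub_le_edgeIndepModel_one_le_disc (n m : ℕ) (h0 : 0 ≤ p) (h1 : p ≤ 1) :
    1 - ENNReal.ofReal ((1 + (1 - 2 * p) ^ n) / 2) ^ m
      ≤ edgeIndepModel n m p {A | 1 ≤ disc A} := by
  have := isProbabilityMeasure_edgeIndepModel n m h0 h1
  rw [← edgeIndepModel_all_rows_even n m h0 h1,
    ← prob_compl_eq_one_sub (Set.to_countable _).measurableSet]
  refine measure_mono fun A hA => ?_
  simp only [Set.mem_compl_iff, Set.mem_ofPred_eq, not_forall, Nat.not_even_iff_odd] at hA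
  obtain ⟨i, hi⟩ := hA
  exact one_le_disc_of_odd_row A i hi

end EdgeIndependentModel

lemma one_sub_two_mul_pow_le {p c : ℝ} (n : ℕ) (hpc : p ≤ c) :
    (1 - 2 * p) ^ n ≤ max (exp (-(2 * (p * n)))) ((2 * c - 1) ^ n) := by
  rcases le_or_gt 0 (1 - 2 * p) with h | h
  · refine le_max_of_le_left ?_
    calc (1 - 2 * p) ^ n ≤ exp (-(2 * p)) ^ n := pow_le_pow_left₀ h (one_sub_le_exp_neg _) n
      _ = exp (-(2 * (p * n))) := by rw [← exp_nat_mul]; ring_nf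
  · refine le_max_of_le_right ?_
    calc (1 - 2 * p) ^ n ≤ |1 - 2 * p| ^ n := by rw [← abs_pow]; exact le_abs_self _
      _ ≤ (2 * c - 1) ^ n := pow_le_pow_left₀ (abs_nonneg _) (by rw [abs_of_neg h]; linarith) n

lemma eventually_one_sub_two_mul_pow_le_half {p : ℕ → ℝ} {c : ℝ} (hc1 : c < 1)
    (hpc : ∀ n, p n ≤ c) (hpn : Tendsto (fun n => p n * n) atTop atTop) :
    ∀ᶠ n in atTop, (1 - 2 * p n) ^ n ≤ 1 / 2 := by
  have hexp : Tendsto (fun n : ℕ => exp (-(2 * (p n * n)))) atTop (nhds 0) :=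
    tendsto_exp_atBot.comp (tendsto_neg_atTop_atBot.comp (hpn.const_mul_atTop two_pos))
  have hpow : Tendsto (fun n : ℕ => (2 * max c (1 / 2) - 1) ^ n) atTop (nhds 0) :=
    tendsto_pow_atTop_nhds_zero_of_lt_one (by linarith [le_max_right c (1 / 2)])
      (by linarith [max_lt hc1 (by norm_num : (1 / 2 : ℝ) < 1)])
  have hmax := hexp.max hpow
  rw [max_self] at hmax
  filter_upwards [hmax.eventually (ge_mem_nhds (by norm_num : (0 : ℝ) < 1 / 2))] with n hn
  exact (one_sub_two_mul_pow_le n ((hpc n).trans (le_max_left c (1 / 2)))).trans hn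

lemma ENNReal.tendsto_one_sub_pow_of_eventually_le {ι : Type*} {l : Filter ι} {b : ι → ℝ≥0∞}
    {m : ι → ℕ} {q : ℝ≥0∞} (hq : q < 1) (hb : ∀ᶠ i in l, b i ≤ q) (hm : Tendsto m l atTop) :
    Tendsto (fun i => 1 - b i ^ m i) l (nhds 1) := by
  have hqm : Tendsto (fun i => q ^ m i) l (nhds 0) :=
    (ENNReal.tendsto_pow_atTop_nhds_zero_of_lt_one hq).comp hm
  have hbm : Tendsto (fun i => b i ^ m i) l (nhds 0) :=
    tendsto_of_tendsto_of_tendsto_of_le_of_le' tendsto_const_nhds hqm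
      (Eventually.of_forall fun _ => bot_le) (hb.mono fun i hi => pow_le_pow_left' hi _)
  simpa using ENNReal.Tendsto.sub tendsto_const_nhds hbm (Or.inl ENNReal.one_ne_top)

theorem edge_independent_disc_ge_one_general (m : ℕ → ℕ) (p : ℕ → ℝ)
    (hm : Tendsto m atTop atTop)
    (hpn : Tendsto (fun n => p n * n) atTop atTop)
    (hpc : ∃ c : ℝ, c < 1 ∧ ∀ n, p n ≤ c) :
    Tendsto (fun n => edgeIndepModel n (m n) (p n) {A | 1 ≤ disc A})
      atTop (nhds 1) := by
  obtain ⟨c, hc1, hpc⟩ := hpc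
  have hp0 : ∀ᶠ n in atTop, 0 ≤ p n := (hpn.eventually_ge_atTop 1).mono fun n hn => by
    nlinarith [(Nat.cast_nonneg n : (0 : ℝ) ≤ n)]
  have hp1 (n : ℕ) : p n ≤ 1 := (hpc n).trans hc1.le
  have hbase : ∀ᶠ n in atTop,
      ENNReal.ofReal ((1 + (1 - 2 * p n) ^ n) / 2) ≤ ENNReal.ofReal (3 / 4) :=
    (eventually_one_sub_two_mul_pow_le_half hc1 hpc hpn).mono fun n hn =>
      ENNReal.ofReal_le_ofReal (by linarith)
  refine tendsto_of_tendsto_of_tendsto_of_le_of_le'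
    (ENNReal.tendsto_one_sub_pow_of_eventually_le (by norm_num) hbase hm) tendsto_const_nhds ?_ ?_
  · filter_upwards [hp0] with n hn using one_sub_le_edgeIndepModel_one_le_disc n (m n) hn (hp1 n)
  · filter_upwards [hp0] with n hn
    have := isProbabilityMeasure_edgeIndepModel n (m n) hn (hp1 n)
    exact prob_le_one

/-- Proposition 8 of "The Phase Transition of Discrepancy in Random Hypergraphs":
if `m → ∞`, `pn → ∞` and `p` is bounded away from `1`, then w.h.p.
`disc(H) ≥ 1` for `H ∼ ℍ(n, m, p)`. -/
theorem edge_independent_disc_ge_one (m : ℕ → ℕ) (p : ℕ → ℝ)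
    (hp0 : ∀ n, 0 ≤ p n)
    (hm : Tendsto m atTop atTop)
    (hpn : Tendsto (fun n => p n * n) atTop atTop)
    (hpc : ∃ c : ℝ, c < 1 ∧ ∀ n, p n ≤ c) :
    Tendsto (fun n => edgeIndepModel n (m n) (p n) {A | 1 ≤ disc A})
      atTop (nhds 1) :=
  edge_independent_disc_ge_one_general m p hm hpn hpc
end

section
/- Let m = m(n) and d = d(n) be integers with 1 ≤ d ≤ m, satisfying m(n) → ∞ and d(n)·n/m(n) → ∞ as n → ∞, with d/m bounded away from 1 (there is a constant c < 1 with d(n)/m(n) ≤ c for all n). Then for H drawn from the edge-dependent model H(n, m(n), d(n)), the probability that disc(H) ≥ 1 tends to 1 as n → ∞. -/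
open MeasureTheory ProbabilityTheory Filter Real
open scoped ENNReal NNReal

/-!
If `disc A = 0`, some colouring makes every row sum vanish, so every row of `A` has an even
number of ones. Then the first column of `A` is the parity vector of the other columns, and since
the columns are independent and each column takes any fixed value with probability at most
`1 / C(m, d)`, this happens with probability at most `1 / C(m, d) ≤ 1 / m`, using `1 ≤ d < m`.
-/

open Finset

theorem Nat.self_le_choose {n k : ℕ} (hk0 : 0 < k) (hkn : k < n) : n ≤ n.choose k := by
  induction n generalizing k with
  | zero => omega
  | succ n ih =>
    obtain ⟨k, rfl⟩ := Nat.exists_eq_add_of_lt hk0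
    rw [zero_add, Nat.choose_succ_succ']
    rcases Nat.eq_zero_or_pos k with rfl | hk
    · simp [add_comm]
    · have := ih hk (by omega)
      have := Nat.choose_pos (show k + 1 ≤ n by omega)
      omega

theorem card_boolFun_with_card_true_eq_choose (ι : Type*) [Fintype ι] [DecidableEq ι] (d : ℕ) :
    #{v : ι → Bool | #{j | v j = true} = d} = (Fintype.card ι).choose d := by
  rw [← card_univ, ← card_powersetCard]
  refine card_nbij' (fun v => ({j | v j = true} : Finset ι)) (fun s j => decide (j ∈ s))
    ?_ ?_ ?_ ?_
  · intro v hv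
    simpa [mem_powersetCard] using hv
  · intro s hs
    simp_all [mem_powersetCard]
  · intro v _
    funext j
    simp
  · intro s _
    ext j
    simp

theorem isProbabilityMeasure_uniformColumn {m d : ℕ} (h : d ≤ m) :
    IsProbabilityMeasure (uniformColumn m d) := by
  constructor
  simp only [uniformColumn, Measure.smul_apply, Measure.finsetSum_apply, measure_univ, sum_const,
    nsmul_one, card_boolFun_with_card_true_eq_choose, Fintype.card_fin, smul_eq_mul]
  exact ENNReal.inv_mul_cancel (by exact_mod_cast (Nat.choose_pos h).ne')
    (ENNReal.natCast_ne_top _)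

theorem uniformColumn_singleton_le (m d : ℕ) (w : Fin m → Bool) :
    uniformColumn m d {w} ≤ (m.choose d : ℝ≥0∞)⁻¹ := by
  simp only [uniformColumn, Measure.smul_apply, Measure.finsetSum_apply,
    card_boolFun_with_card_true_eq_choose, Fintype.card_fin, smul_eq_mul]
  refine mul_le_of_le_one_right' ?_
  simp only [Measure.dirac_apply, Set.indicator_apply, Set.mem_singleton_iff, Pi.one_apply,
    sum_ite_eq']
  split_ifs <;> simp

theorem Measure.prod_setOf_fst_eq_le {X Y : Type*} [MeasurableSpace X] [MeasurableSpace Y]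
    [Countable X] [Countable Y] [MeasurableSingletonClass X] [MeasurableSingletonClass Y]
    {μ : Measure X} {ν : Measure Y} [SFinite μ] [SFinite ν] {ε : ℝ≥0∞}
    (hμ : ∀ x, μ {x} ≤ ε) (g : Y → X) :
    μ.prod ν {p | p.1 = g p.2} ≤ ε * ν Set.univ := by
  rw [Measure.prod_apply_symm MeasurableSet.of_discrete, ← lintegral_const]
  exact lintegral_mono fun y => hμ (g y)

theorem head_eq_parity_tail_of_forall_even_card {m n : ℕ} (B : Fin (n + 1) → Fin m → Bool)
    (hB : ∀ i, Even (#{k | B k i = true})) :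
    B 0 = fun i => decide (Odd (#{k : Fin n | B k.succ i = true})) := by
  funext i
  have h := hB i
  rw [Fin.card_filter_univ_succ'] at h
  cases hb : B 0 i <;> simp_all [Nat.even_add_one, parity_simps]

theorem pi_setOf_forall_even_card_le {m n : ℕ} (μ : Measure (Fin m → Bool))
    [IsProbabilityMeasure μ] {ε : ℝ≥0∞} (hμ : ∀ x, μ {x} ≤ ε) :
    Measure.pi (fun _ : Fin (n + 1) => μ) {B | ∀ i, Even (#{k | B k i = true})} ≤ ε := by
  let parity (r : Fin n → Fin m → Bool) : Fin m → Bool :=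
    fun i => decide (Odd (#{k | r k i = true}))
  calc Measure.pi (fun _ => μ) {B | ∀ i, Even (#{k | B k i = true})}
      ≤ Measure.pi (fun _ => μ)
          (MeasurableEquiv.piFinSuccAbove (fun _ => Fin m → Bool) 0 ⁻¹'
            {p | p.1 = parity p.2}) :=
        measure_mono fun B hB => head_eq_parity_tail_of_forall_even_card B hB
    _ = μ.prod (Measure.pi fun _ : Fin n => μ) {p | p.1 = parity p.2} :=
        (measurePreserving_piFinSuccAbove (fun _ => μ) 0).measure_preimage_equiv _
    _ ≤ ε := by
        simpa using Measure.prod_setOf_fst_eq_le (ν := Measure.pi fun _ : Fin n => μ) hμ parity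

theorem even_card_of_sum_signs_eq_zero {ι : Type*} [Fintype ι] (a ψ : ι → Bool)
    (h : ∑ k, (if a k then (if ψ k then (1 : ℤ) else -1) else 0) = 0) :
    Even (#{k | a k = true}) := by
  have hmod : ((∑ k, (if a k then (if ψ k then (1 : ℤ) else -1) else 0) : ℤ) : ZMod 2)
      = #{k | a k = true} := by
    rw [card_filter, Nat.cast_sum]
    push_cast
    refine sum_congr rfl fun k _ => ?_
    cases a k <;> cases ψ k <;> simp
  rw [h, Int.cast_zero, eq_comm, ZMod.natCast_eq_zero_iff] at hmod
  exact even_iff_two_dvd.mpr hmod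

theorem even_card_row_of_disc_eq_zero {m n : ℕ} {A : Fin m → Fin n → Bool} (h : disc A = 0)
    (i : Fin m) : Even (#{k | A i k = true}) := by
  obtain ⟨ψ, hψ⟩ := exists_eq_ciInf_of_finite (f := fun ψ : Fin n → Bool =>
    univ.sup fun i => (∑ k, if A i k then (if ψ k then (1 : ℤ) else -1) else 0).natAbs)
  rw [← disc, h, ← Nat.bot_eq_zero, Finset.sup_eq_bot_iff] at hψ
  exact even_card_of_sum_signs_eq_zero _ ψ (Int.natAbs_eq_zero.mp (hψ i (mem_univ i)))

theorem isProbabilityMeasure_edgeDepModel {n m d : ℕ} (h : d ≤ m) :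
    IsProbabilityMeasure (edgeDepModel n m d) :=
  have := isProbabilityMeasure_uniformColumn h
  Measure.isProbabilityMeasure_map AEMeasurable.of_discrete

theorem edgeDepModel_disc_eq_zero_le {n m d : ℕ} (h : d ≤ m) :
    edgeDepModel (n + 1) m d {A | disc A = 0} ≤ (m.choose d : ℝ≥0∞)⁻¹ := by
  have := isProbabilityMeasure_uniformColumn h
  rw [edgeDepModel, Measure.map_apply (measurable_of_countable _) MeasurableSet.of_discrete]
  exact (measure_mono fun B hB i => even_card_row_of_disc_eq_zero hB i).trans
    (pi_setOf_forall_even_card_le _ (uniformColumn_singleton_le m d))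

theorem edge_dependent_disc_ge_one_general (m d : ℕ → ℕ)
    (hdm : ∀ n, 1 ≤ d n ∧ d n ≤ m n)
    (hm : Tendsto m atTop atTop)
    (hpc : ∃ c : ℝ, c < 1 ∧ ∀ n, (d n : ℝ) / m n ≤ c) :
    Tendsto (fun n => edgeDepModel n (m n) (d n) {A | 1 ≤ disc A})
      atTop (nhds 1) := by
  obtain ⟨c, hc1, hc⟩ := hpc
  have hd_lt (n : ℕ) : d n < m n := by
    have hm0 : (0 : ℝ) < m n := by exact_mod_cast (hdm n).1.trans (hdm n).2
    have := (div_le_iff₀ hm0).mp (hc n)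
    exact_mod_cast (show (d n : ℝ) < m n by nlinarith)
  have hzero : Tendsto (fun n => edgeDepModel n (m n) (d n) {A | disc A = 0})
      atTop (nhds 0) := by
    refine tendsto_of_tendsto_of_tendsto_of_le_of_le' tendsto_const_nhds
      (ENNReal.tendsto_inv_nat_nhds_zero.comp hm) (.of_forall fun _ => zero_le) ?_
    filter_upwards [eventually_ge_atTop 1] with n hn
    obtain ⟨n, rfl⟩ := Nat.exists_eq_add_of_le' hn
    refine (edgeDepModel_disc_eq_zero_le (hdm _).2).trans (ENNReal.inv_le_inv.mpr ?_)
    exact_mod_cast Nat.self_le_choose (hdm _).1 (hd_lt _)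
  have hcompl (n : ℕ) : edgeDepModel n (m n) (d n) {A | 1 ≤ disc A}
      = 1 - edgeDepModel n (m n) (d n) {A | disc A = 0} := by
    have := isProbabilityMeasure_edgeDepModel (n := n) (hdm n).2
    rw [← prob_compl_eq_one_sub MeasurableSet.of_discrete]
    congr 1
    ext A
    simp [Nat.one_le_iff_ne_zero]
  simpa [hcompl] using ENNReal.Tendsto.sub tendsto_const_nhds hzero (.inl ENNReal.one_ne_top)

/-- Proposition 9 of "The Phase Transition of Discrepancy in Random Hypergraphs":
if `m → ∞`, `dn/m → ∞` and `d/m` is bounded away from `1`, then w.h.p.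
`disc(H) ≥ 1` for `H ∼ ℋ(n, m, d)`. -/
theorem edge_dependent_disc_ge_one (m d : ℕ → ℕ)
    (hdm : ∀ n, 1 ≤ d n ∧ d n ≤ m n)
    (hm : Tendsto m atTop atTop)
    (hdnm : Tendsto (fun n => (d n : ℝ) * n / m n) atTop atTop)
    (hpc : ∃ c : ℝ, c < 1 ∧ ∀ n, (d n : ℝ) / m n ≤ c) :
    Tendsto (fun n => edgeDepModel n (m n) (d n) {A | 1 ≤ disc A})
      atTop (nhds 1) :=
  edge_dependent_disc_ge_one_general m d hdm hm hpc
end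

section
/- Let n, m, d, r, ℓ be positive integers with d ≤ m, r ≤ m, ℓ ≤ n, let p = d/m, and let s be a real number with s ≥ 10·d·ℓ/m. Let A be a random m×n {0,1}-matrix whose entries are i.i.d. Bernoulli(p) (the incidence matrix of the edge-independent model H(n,m,p)). Let Q(r, ℓ, s) be the event that there exist subsets R ⊆ {1,…,m} with |R| = r and L ⊆ {1,…,n} with |L| = ℓ such that Σ_{k ∈ L} A_{i,k} ≥ s for every i ∈ R. Then P[ Q(r, ℓ, s) ] ≤ C(m, r) · C(n, ℓ) · exp( −(r·s/2) · log( s·m/(d·ℓ) ) ), where C(a, b) denotes the binomial coefficient a choose b. -/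
open MeasureTheory ProbabilityTheory Filter Real
open scoped ENNReal NNReal

/-! Union bound over the `C(m,r) · C(n,ℓ)` choices of `R` and `L`. For fixed `L`, a row with
sum at least `s` has `t = ⌈s⌉` ones inside `L`, so a second union bound over `t`-subsets of `L`
bounds its probability by `C(ℓ,t) pᵗ ≤ (eℓp/t)ᵗ ≤ (e/u)ˢ`, where `u = sm/(dℓ) ≥ 10`. As
`log u ≥ 2`, this is at most `exp(-(s/2) log u)`, and independence of the rows gives the
`r`-th power. -/

open Finset

namespace MeasureTheory.Measure

variable {ι α : Type*} [Fintype ι] [MeasurableSpace α] (μ : Measure α) [IsProbabilityMeasure μ]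

lemma pi_setOf_forall_mem (S : Set α) (T : Finset ι) :
    Measure.pi (fun _ : ι => μ) {x | ∀ i ∈ T, x i ∈ S} = μ S ^ #T := by
  have : {x : ι → α | ∀ i ∈ T, x i ∈ S} = (T : Set ι).pi fun _ => S := by
    ext x; simp [Set.mem_pi]
  rw [this, Measure.pi_pi_finset, prod_const]

lemma pi_setOf_le_card_filter_le (P : α → Prop) [DecidablePred P] (L : Finset ι) (t : ℕ) :
    Measure.pi (fun _ : ι => μ) {x | t ≤ #{i ∈ L | P (x i)}} ≤ (#L).choose t * μ {a | P a} ^ t := by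
  have hcover : {x : ι → α | t ≤ #{i ∈ L | P (x i)}} ⊆
      ⋃ T ∈ L.powersetCard t, {x | ∀ i ∈ T, x i ∈ {a | P a}} := by
    intro x hx
    obtain ⟨T, hTsub, hTcard⟩ := exists_subset_card_eq hx
    exact Set.mem_biUnion (mem_powersetCard.2 ⟨hTsub.trans (filter_subset _ _), hTcard⟩)
      fun i hi => (mem_filter.1 (hTsub hi)).2
  calc _ ≤ ∑ T ∈ L.powersetCard t, Measure.pi (fun _ : ι => μ) {x | ∀ i ∈ T, x i ∈ {a | P a}} :=
        (measure_mono hcover).trans (measure_biUnion_finset_le _ _)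
    _ = (#L).choose t * μ {a | P a} ^ t := by
        rw [Finset.sum_congr rfl fun T hT => by
          rw [pi_setOf_forall_mem, (mem_powersetCard.1 hT).2], Finset.sum_const,
          card_powersetCard, nsmul_eq_mul]

variable {κ : Type*} [Fintype κ]

lemma pi_setOf_exists_rows_mem_le (E : Finset κ → Set α) (r ℓ : ℕ) {c : ℝ≥0∞}
    (hE : ∀ L : Finset κ, #L = ℓ → μ (E L) ≤ c) :
    Measure.pi (fun _ : ι => μ)
        {A | ∃ R : Finset ι, ∃ L : Finset κ, #R = r ∧ #L = ℓ ∧ ∀ i ∈ R, A i ∈ E L}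
      ≤ (Fintype.card ι).choose r * (Fintype.card κ).choose ℓ * c ^ r := by
  classical
  have hcover : {A : ι → α | ∃ R : Finset ι, ∃ L : Finset κ, #R = r ∧ #L = ℓ ∧ ∀ i ∈ R, A i ∈ E L}
      ⊆ ⋃ R ∈ univ.powersetCard r, ⋃ L ∈ univ.powersetCard ℓ, {A | ∀ i ∈ R, A i ∈ E L} := by
    rintro A ⟨R, L, hR, hL, hA⟩
    exact Set.mem_biUnion (mem_powersetCard_univ.2 hR)
      (Set.mem_biUnion (mem_powersetCard_univ.2 hL) hA)
  calc _ ≤ ∑ R ∈ univ.powersetCard r, ∑ L ∈ univ.powersetCard ℓ,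
        Measure.pi (fun _ : ι => μ) {A | ∀ i ∈ R, A i ∈ E L} :=
        (measure_mono hcover).trans <| (measure_biUnion_finset_le _ _).trans <|
          Finset.sum_le_sum fun R _ => measure_biUnion_finset_le _ _
    _ ≤ ∑ R ∈ univ.powersetCard r, ∑ L ∈ univ.powersetCard ℓ, c ^ r := by
        gcongr with R hR L hL
        rw [pi_setOf_forall_mem, mem_powersetCard_univ.1 hR]
        exact pow_le_pow_left' (hE L (mem_powersetCard_univ.1 hL)) r
    _ = _ := by simp [card_powersetCard, mul_assoc]

end MeasureTheory.Measure

lemma bernoulliMeasure_singleton_true (p : ℝ) : bernoulliMeasure p {true} = ENNReal.ofReal p := by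
  simp [_root_.bernoulliMeasure]

lemma isProbabilityMeasure_bernoulliMeasure_s16 {p : ℝ} (hp0 : 0 ≤ p) (hp1 : p ≤ 1) :
    IsProbabilityMeasure (bernoulliMeasure p) :=
  ⟨by simp [_root_.bernoulliMeasure, ← ENNReal.ofReal_add hp0 (sub_nonneg.2 hp1)]⟩

lemma pi_bernoulliMeasure_setOf_le_sum_le {ι : Type*} [Fintype ι] {p : ℝ} (hp0 : 0 ≤ p)
    (hp1 : p ≤ 1) (L : Finset ι) (s : ℝ) :
    Measure.pi (fun _ : ι => bernoulliMeasure p) {v | s ≤ ∑ k ∈ L, if v k then (1 : ℝ) else 0}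
      ≤ ENNReal.ofReal ((#L).choose ⌈s⌉₊ * p ^ ⌈s⌉₊) := by
  have := isProbabilityMeasure_bernoulliMeasure_s16 hp0 hp1
  have hsub : {v : ι → Bool | s ≤ ∑ k ∈ L, if v k then (1 : ℝ) else 0} ⊆
      {v | ⌈s⌉₊ ≤ #{k ∈ L | v k = true}} := by
    intro v hv
    simpa [Nat.ceil_le, sum_boole] using hv
  refine (measure_mono hsub).trans ?_
  rw [ENNReal.ofReal_mul (by positivity), ENNReal.ofReal_natCast, ENNReal.ofReal_pow hp0,
    ← bernoulliMeasure_singleton_true]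
  exact Measure.pi_setOf_le_card_filter_le _ (· = true) _ _

open Nat in
lemma Real.pow_div_factorial_le_exp_one_mul_div_pow {x : ℝ} (hx : 0 ≤ x) (t : ℕ) :
    x ^ t / t ! ≤ (exp 1 * x / t) ^ t := by
  rcases t.eq_zero_or_pos with rfl | ht
  · simp
  have ht' : (0 : ℝ) < t := by exact_mod_cast ht
  calc x ^ t / t ! = (x / t) ^ t * ((t : ℝ) ^ t / t !) := by
        rw [mul_div_assoc', ← mul_pow, div_mul_cancel₀ _ ht'.ne']
    _ ≤ (x / t) ^ t * exp t := by gcongr; exact pow_div_factorial_le_exp _ ht'.le t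
    _ = (exp 1 * x / t) ^ t := by
        rw [← exp_one_pow, ← mul_pow]; ring

lemma Real.two_le_log_of_ten_le {u : ℝ} (hu : 10 ≤ u) : 2 ≤ log u := by
  have hexp : exp 2 = exp 1 ^ 2 := by rw [← exp_nat_mul]; norm_num
  rw [le_log_iff_exp_le (by linarith), hexp]
  nlinarith [exp_one_lt_d9, exp_pos 1]

open Nat in
lemma Real.pow_div_factorial_ceil_le {x s : ℝ} (hx : 0 < x) (hs : 10 * x ≤ s) :
    x ^ ⌈s⌉₊ / ⌈s⌉₊ ! ≤ exp (-(s / 2) * log (s / x)) := by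
  have hs0 : 0 < s := by linarith
  have hst : s ≤ ⌈s⌉₊ := le_ceil s
  have hsx : 10 ≤ s / x := (le_div_iff₀ hx).2 (by linarith)
  have hlog : 2 ≤ log (s / x) := two_le_log_of_ten_le hsx
  set b := exp 1 / (s / x) with hb
  have hb0 : 0 < b := by positivity
  have hb1 : b ≤ 1 := by
    rw [div_le_one (by positivity)]
    linarith [exp_one_lt_d9]
  calc x ^ ⌈s⌉₊ / ⌈s⌉₊ ! ≤ (exp 1 * x / ⌈s⌉₊) ^ ⌈s⌉₊ :=
        pow_div_factorial_le_exp_one_mul_div_pow hx.le _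
    _ ≤ b ^ (⌈s⌉₊ : ℝ) := by
        rw [rpow_natCast, hb, div_div_eq_mul_div, mul_div_assoc, mul_div_assoc]
        gcongr
    _ ≤ b ^ s := rpow_le_rpow_of_exponent_ge hb0 hb1 hst
    _ = exp (s * (1 - log (s / x))) := by
        rw [rpow_def_of_pos hb0, hb, log_div (exp_pos 1).ne' (by positivity), log_exp, mul_comm]
    _ ≤ exp (-(s / 2) * log (s / x)) := exp_le_exp.2 (by nlinarith)

lemma choose_mul_pow_ceil_le {ℓ : ℕ} {p s : ℝ} (hℓ : 0 < ℓ) (hp : 0 < p) (hs : 10 * (ℓ * p) ≤ s) :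
    (ℓ.choose ⌈s⌉₊ : ℝ) * p ^ ⌈s⌉₊ ≤ exp (-(s / 2) * log (s / (ℓ * p))) :=
  calc (ℓ.choose ⌈s⌉₊ : ℝ) * p ^ ⌈s⌉₊ ≤ (ℓ : ℝ) ^ ⌈s⌉₊ / ⌈s⌉₊.factorial * p ^ ⌈s⌉₊ := by
        gcongr; exact Nat.choose_le_pow_div _ _
    _ = (ℓ * p) ^ ⌈s⌉₊ / ⌈s⌉₊.factorial := by ring
    _ ≤ _ := pow_div_factorial_ceil_le (by positivity) hs

theorem submatrix_row_sums_bound_general (n m d r ℓ : ℕ)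
    (hm : 1 ≤ m) (hd1 : 1 ≤ d) (hdm : d ≤ m)
    (hl1 : 1 ≤ ℓ)
    (s : ℝ) (hs : 10 * (d : ℝ) * ℓ / m ≤ s) :
    edgeIndepModel n m ((d : ℝ) / m)
        {A | ∃ R : Finset (Fin m), ∃ L : Finset (Fin n),
          R.card = r ∧ L.card = ℓ ∧
            ∀ i ∈ R, s ≤ ∑ k ∈ L, (if A i k then (1 : ℝ) else 0)}
      ≤ ENNReal.ofReal ((m.choose r : ℝ) * (n.choose ℓ) *
          Real.exp (-((r : ℝ) * s / 2) * Real.log (s * m / ((d : ℝ) * ℓ)))) := by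
  have hm0 : (0 : ℝ) < m := by exact_mod_cast hm
  have hp0 : (0 : ℝ) < d / m := by positivity
  have hp1 : (d : ℝ) / m ≤ 1 := (div_le_one hm0).2 (by exact_mod_cast hdm)
  have := isProbabilityMeasure_bernoulliMeasure_s16 hp0.le hp1
  have hdecay := choose_mul_pow_ceil_le (s := s) (by omega : 0 < ℓ) hp0 (by
    linarith [show 10 * (ℓ * (d / m : ℝ)) = 10 * d * ℓ / m by ring])
  rw [show s / (ℓ * (d / m)) = s * m / (d * ℓ) by field_simp] at hdecay
  have hrow : ∀ L : Finset (Fin n), #L = ℓ →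
      Measure.pi (fun _ => bernoulliMeasure ((d : ℝ) / m))
        {v | s ≤ ∑ k ∈ L, if v k then (1 : ℝ) else 0}
        ≤ ENNReal.ofReal (ℓ.choose ⌈s⌉₊ * (d / m) ^ ⌈s⌉₊) := fun L hL => by
    rw [← hL]; exact pi_bernoulliMeasure_setOf_le_sum_le hp0.le hp1 L s
  calc _ ≤ m.choose r * n.choose ℓ * ENNReal.ofReal (ℓ.choose ⌈s⌉₊ * (d / m) ^ ⌈s⌉₊) ^ r := by
        have h := Measure.pi_setOf_exists_rows_mem_le (ι := Fin m) _ _ r ℓ hrow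
        rwa [Fintype.card_fin, Fintype.card_fin] at h
    _ ≤ _ := by
        rw [← ENNReal.ofReal_pow (by positivity), ← ENNReal.ofReal_natCast,
          ← ENNReal.ofReal_natCast, ← ENNReal.ofReal_mul (by positivity),
          ← ENNReal.ofReal_mul (by positivity)]
        refine ENNReal.ofReal_le_ofReal ?_
        rw [show -((r : ℝ) * s / 2) * log (s * m / (d * ℓ)) = r * (-(s / 2) * log (s * m / (d * ℓ)))
          by ring, exp_nat_mul]
        exact mul_le_mul_of_nonneg_left (pow_le_pow_left₀ (by positivity) hdecay r) (by positivity)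

/-- Lemma 14 (after Bansal–Meka, Lemma 6 of arXiv:1907.04409) of "The Phase
Transition of Discrepancy in Random Hypergraphs": for `H ∼ ℍ(n, m, d/m)` and
`s ≥ 10dℓ/m`, the probability that some `r × ℓ` sub-matrix of the incidence matrix
has every row sum at least `s` is at most
`C(m,r)·C(n,ℓ)·exp(−(rs/2)·log(sm/(dℓ)))`. -/
theorem submatrix_row_sums_bound (n m d r ℓ : ℕ)
    (hn : 1 ≤ n) (hm : 1 ≤ m) (hd1 : 1 ≤ d) (hdm : d ≤ m)
    (hr1 : 1 ≤ r) (hrm : r ≤ m) (hl1 : 1 ≤ ℓ) (hln : ℓ ≤ n)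
    (s : ℝ) (hs : 10 * (d : ℝ) * ℓ / m ≤ s) :
    edgeIndepModel n m ((d : ℝ) / m)
        {A | ∃ R : Finset (Fin m), ∃ L : Finset (Fin n),
          R.card = r ∧ L.card = ℓ ∧
            ∀ i ∈ R, s ≤ ∑ k ∈ L, (if A i k then (1 : ℝ) else 0)}
      ≤ ENNReal.ofReal ((m.choose r : ℝ) * (n.choose ℓ) *
          Real.exp (-((r : ℝ) * s / 2) * Real.log (s * m / ((d : ℝ) * ℓ)))) :=
  submatrix_row_sums_bound_general n m d r ℓ hm hd1 hdm hl1 s hs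
end
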